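/- Let R be a commutative ring and G an object of the derived category D(R) such that H^k(G) has finite length for every k and H^k(G) = 0 for |k| > N, and set B := max{ length_R(H^k(G)) : −N ≤ k ≤ N } (a natural number). If an object Y of D(R) admits a tower over G with shifts n_1, …, n_k, then H^0(Y) has finite length and, for every real number t, (length_R(H^0(Y)) : ℝ) ≤ B · e^{N·|t|} · Σ_{i=1}^{k} e^{n_i · t}. -/

import Mathlib

/-!
Applying `H⁰` to the triangles `E_{i-1} → E_i → G[n_i]` of the tower gives exact sequences
`H⁰(E_{i-1}) → H⁰(E_i) → H^{n_i}(G)`, so length is subadditive along the tower and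
`length H⁰(Y) ≤ Σ length H^{n_i}(G)`. Each summand is at most `B` and vanishes unless `|n_i| ≤ N`,
in which case `e^{N|t|} e^{n_i t} ≥ 1`.
-/

open CategoryTheory Limits Pretriangulated

/-- The length of a module, defined as the Krull dimension of its lattice of submodules. -/
noncomputable def moduleLength (R M : Type*) [Ring R] [AddCommGroup M] [Module R M] : ℕ∞ :=
  WithBot.unbotD 0 (Order.krullDim (Submodule R M))

theorem moduleLength_eq_length (R M : Type*) [Ring R] [AddCommGroup M] [Module R M] :
    moduleLength R M = Module.length R M := by
  rw [moduleLength, ← Module.coe_length, WithBot.unbotD_coe]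

theorem Module.length_le_add_of_exact {R M N P : Type*} [Ring R] [AddCommGroup M] [Module R M]
    [AddCommGroup N] [Module R N] [AddCommGroup P] [Module R P]
    {f : N →ₗ[R] M} {g : M →ₗ[R] P} (H : Function.Exact f g) :
    Module.length R M ≤ Module.length R N + Module.length R P := by
  rw [Module.length_eq_add_of_exact _ _ (Submodule.subtype_injective _)
    (Submodule.mkQ_surjective _) (LinearMap.exact_subtype_mkQ (LinearMap.ker g))]
  gcongr
  · rw [LinearMap.exact_iff.mp H]
    exact Module.length_le_of_surjective _ f.surjective_rangeRestrict
  · rw [g.quotKerEquivRange.length_eq]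
    exact Module.length_le_of_injective _ (Submodule.subtype_injective _)

theorem Fin.last_le_sum_of_succ_le_add {M : Type*} [AddCommMonoid M] [PartialOrder M]
    [IsOrderedAddMonoid M] :
    ∀ {k : ℕ} {a : Fin (k + 1) → M} {c : Fin k → M}, a 0 ≤ 0 →
      (∀ i, a i.succ ≤ a i.castSucc + c i) → a (Fin.last k) ≤ ∑ i, c i
  | 0, _, _, h0, _ => by simpa using h0
  | k + 1, a, c, h0, hstep => by
    rw [Fin.sum_univ_castSucc]
    calc a (Fin.last (k + 1)) ≤ a (Fin.last k).castSucc + c (Fin.last k) := hstep (Fin.last k)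
      _ ≤ _ := by
        gcongr
        exact Fin.last_le_sum_of_succ_le_add (a := a ∘ Fin.castSucc) h0
          fun i => by simpa using hstep i.castSucc

namespace DerivedCategory

variable {R : Type*} [Ring R] [HasDerivedCategory (ModuleCat R)]

theorem length_homology_shift (X : DerivedCategory (ModuleCat R)) (n q : ℤ) :
    Module.length R ((homologyFunctor (ModuleCat R) q).obj (X⟦n⟧)) =
      Module.length R ((homologyFunctor (ModuleCat R) (n + q)).obj X) :=
  (((homologyFunctor (ModuleCat R) 0).shiftIso n q (n + q) rfl).app X).toLinearEquiv.length_eq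

theorem length_homology_obj₂_le {T : Triangle (DerivedCategory (ModuleCat R))}
    (hT : T ∈ distTriang _) (q : ℤ) :
    Module.length R ((homologyFunctor (ModuleCat R) q).obj T.obj₂) ≤
      Module.length R ((homologyFunctor (ModuleCat R) q).obj T.obj₁) +
        Module.length R ((homologyFunctor (ModuleCat R) q).obj T.obj₃) :=
  Module.length_le_add_of_exact
    ((ShortComplex.ShortExact.moduleCat_exact_iff_function_exact _).mp
      (HomologySequence.exact₂ T hT q))

end DerivedCategory

theorem le_ite_of_eq_sup_Icc {α : Type*} [SemilatticeSup α] [OrderBot α] [Zero α]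
    {f : ℤ → α} {N : ℕ} {B : α}
    (hvan : ∀ j, (N : ℤ) < |j| → f j = 0) (hB : B = (Finset.Icc (-(N : ℤ)) N).sup f) (j : ℤ) :
    f j ≤ if |j| ≤ (N : ℤ) then B else 0 := by
  split_ifs with hj
  · exact hB ▸ Finset.le_sup (Finset.mem_Icc.mpr (abs_le.mp hj))
  · exact (hvan j (not_le.mp hj)).le

theorem Real.one_le_exp_mul_exp_of_abs_le {a b : ℝ} (h : |a| ≤ b) (t : ℝ) :
    1 ≤ Real.exp (b * |t|) * Real.exp (a * t) := by
  rw [← Real.exp_add, Real.one_le_exp_iff]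
  have : |a * t| ≤ b * |t| := by
    rw [abs_mul]
    exact mul_le_mul_of_nonneg_right h (abs_nonneg t)
  linarith [neg_abs_le (a * t)]

universe w u

variable {R : Type u} [CommRing R] [HasDerivedCategory.{w} (ModuleCat.{u} R)]

/-- A tower of distinguished triangles over `G` reaching `Y` with shifts `n 0, …, n (k-1)`:
objects `0 ≅ E 0, E 1, …, E k ≅ Y` of the derived category together with distinguished
triangles `E i ⟶ E (i+1) ⟶ G⟦n i⟧ ⟶ (E i)⟦1⟧`. -/
def IsTower (G Y : DerivedCategory (ModuleCat.{u} R)) {k : ℕ} (n : Fin k → ℤ)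
    (E : Fin (k + 1) → DerivedCategory (ModuleCat.{u} R)) : Prop :=
  IsZero (E 0) ∧ Nonempty (E (Fin.last k) ≅ Y) ∧
    ∀ i : Fin k, ∃ (f : E i.castSucc ⟶ E i.succ) (g : E i.succ ⟶ G⟦n i⟧)
      (h : G⟦n i⟧ ⟶ (E i.castSucc)⟦(1 : ℤ)⟧),
      Triangle.mk f g h ∈ distTriang (DerivedCategory (ModuleCat.{u} R))

open DerivedCategory in
theorem IsTower.length_homology_le {G Y : DerivedCategory (ModuleCat.{u} R)} {k : ℕ}
    {n : Fin k → ℤ} {E : Fin (k + 1) → DerivedCategory (ModuleCat.{u} R)}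
    (hE : IsTower G Y n E) (q : ℤ) :
    Module.length R ((homologyFunctor (ModuleCat R) q).obj Y) ≤
      ∑ i, Module.length R ((homologyFunctor (ModuleCat R) (n i + q)).obj G) := by
  obtain ⟨hE₀, ⟨eY⟩, htri⟩ := hE
  rw [← ((homologyFunctor (ModuleCat R) q).mapIso eY).toLinearEquiv.length_eq]
  refine Fin.last_le_sum_of_succ_le_add
    (a := fun i => Module.length R ((homologyFunctor (ModuleCat R) q).obj (E i))) ?_ fun i => ?_
  · have := ModuleCat.subsingleton_of_isZero ((homologyFunctor (ModuleCat R) q).map_isZero hE₀)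
    exact (Module.length_eq_zero).le
  · obtain ⟨f, g, h, hT⟩ := htri i
    rw [← length_homology_shift]
    exact length_homology_obj₂_le hT q

theorem length_H0_le_complexity_general (G Y : DerivedCategory (ModuleCat.{u} R)) (N : ℕ)
    (hvan : ∀ j : ℤ, (N : ℤ) < |j| →
      IsZero ((DerivedCategory.homologyFunctor (ModuleCat.{u} R) j).obj G))
    (B : ℕ)
    (hB : (B : ℕ∞) = (Finset.Icc (-(N : ℤ)) (N : ℤ)).sup
      (fun j => moduleLength R ((DerivedCategory.homologyFunctor (ModuleCat.{u} R) j).obj G)))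
    {k : ℕ} (n : Fin k → ℤ) (E : Fin (k + 1) → DerivedCategory (ModuleCat.{u} R))
    (hE : IsTower G Y n E) :
    IsFiniteLength R ((DerivedCategory.homologyFunctor (ModuleCat.{u} R) 0).obj Y) ∧
    ∀ t : ℝ,
      ((moduleLength R ((DerivedCategory.homologyFunctor (ModuleCat.{u} R) 0).obj Y)).toNat : ℝ) ≤
        B * Real.exp (N * |t|) * ∑ i : Fin k, Real.exp (n i * t) := by
  simp only [moduleLength_eq_length] at hB ⊢
  have hG : ∀ j, Module.length R ((DerivedCategory.homologyFunctor (ModuleCat.{u} R) j).obj G) ≤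
      ((if |j| ≤ (N : ℤ) then B else 0 : ℕ) : ℕ∞) := fun j => by
    simpa [apply_ite] using le_ite_of_eq_sup_Icc (fun j hj => Module.length_eq_zero_iff.mpr
      (ModuleCat.subsingleton_of_isZero (hvan j hj))) hB j
  have hY : Module.length R ((DerivedCategory.homologyFunctor (ModuleCat.{u} R) 0).obj Y) ≤
      ((∑ i, if |n i| ≤ (N : ℤ) then B else 0 : ℕ) : ℕ∞) := by
    rw [Nat.cast_sum]
    refine (hE.length_homology_le 0).trans (Finset.sum_le_sum fun i _ => ?_)
    rw [add_zero]
    exact hG (n i)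
  refine ⟨?_, fun t => ?_⟩
  · rw [← Module.length_ne_top_iff]
    exact ne_top_of_le_ne_top (ENat.natCast_ne_top _) hY
  calc ((Module.length R ((DerivedCategory.homologyFunctor (ModuleCat.{u} R) 0).obj Y)).toNat : ℝ)
      ≤ ((∑ i, if |n i| ≤ (N : ℤ) then B else 0 : ℕ) : ℝ) := by
        exact_mod_cast ENat.toNat_le_of_le_natCast hY
    _ ≤ ∑ i, B * (Real.exp (N * |t|) * Real.exp (n i * t)) := by
        push_cast
        refine Finset.sum_le_sum fun i _ => ?_
        split_ifs with hi
        · exact le_mul_of_one_le_right (Nat.cast_nonneg B)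
            (Real.one_le_exp_mul_exp_of_abs_le (by exact_mod_cast hi) t)
        · positivity
    _ = B * Real.exp (N * |t|) * ∑ i, Real.exp (n i * t) := by
        rw [mul_assoc, Finset.mul_sum, Finset.mul_sum]

/-- Let `G` be an object of `D(R)` with all cohomology modules of finite
length, vanishing in degrees `|j| > N`, and let `B` be the maximum of the lengths
`length_R Hʲ(G)` for `-N ≤ j ≤ N`. If `Y` admits a tower over `G` with shifts
`n 0, …, n (k-1)`, then `H⁰(Y)` has finite length and, for every real `t`,
`length_R H⁰(Y) ≤ B · e^{N·|t|} · ∑ i, e^{n i · t}`. -/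
theorem length_H0_le_complexity (G Y : DerivedCategory (ModuleCat.{u} R)) (N : ℕ)
    (hfin : ∀ j : ℤ, IsFiniteLength R ((DerivedCategory.homologyFunctor (ModuleCat.{u} R) j).obj G))
    (hvan : ∀ j : ℤ, (N : ℤ) < |j| →
      IsZero ((DerivedCategory.homologyFunctor (ModuleCat.{u} R) j).obj G))
    (B : ℕ)
    (hB : (B : ℕ∞) = (Finset.Icc (-(N : ℤ)) (N : ℤ)).sup
      (fun j => moduleLength R ((DerivedCategory.homologyFunctor (ModuleCat.{u} R) j).obj G)))
    {k : ℕ} (n : Fin k → ℤ) (E : Fin (k + 1) → DerivedCategory (ModuleCat.{u} R))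
    (hE : IsTower G Y n E) :
    IsFiniteLength R ((DerivedCategory.homologyFunctor (ModuleCat.{u} R) 0).obj Y) ∧
    ∀ t : ℝ,
      ((moduleLength R ((DerivedCategory.homologyFunctor (ModuleCat.{u} R) 0).obj Y)).toNat : ℝ) ≤
        B * Real.exp (N * |t|) * ∑ i : Fin k, Real.exp (n i * t) :=
  length_H0_le_complexity_general G Y N hvan B hB n E hE
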